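/- Let β ∈ (1/2,1) and fix u ∈ (0,1). Under the coupling, for every a > 0 there exists n0 such that for all n ≥ n0: Pr( √n·(F̃^{(1)}(u) − E[F̃^{(1)}(u)]) > a·√(u(1−u)) ) ≤ exp(−(a/2)·√(n·u(1−u))) + exp(−n^{1/4}). -/

import Mathlib

open MeasureTheory ProbabilityTheory Filter

noncomputable section

/-- The Bernoulli distribution on `ℝ` (mass `1−p` at `0`, mass `p` at `1`). -/
def bernoulliReal (p : ℝ) : Measure ℝ :=
  ENNReal.ofReal (1 - p) • Measure.dirac 0 + ENNReal.ofReal p • Measure.dirac 1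

/-- The thinned alternative empirical CDF normalized by `n`:
`F̃^{(1)}(u) = (1/n) Σ_{i ∈ I} 1(Q_i^{(1)} ≤ u)`, where `I = {i : B_i = 1}` and
`Q_i^{(1)} = V_i` for `i ∈ I`. -/
def Ftil1 {n : ℕ} {Ω : Type*} (B V : Fin n → Ω → ℝ) (u : ℝ) (ω : Ω) : ℝ :=
  (∑ i, if B i ω = 1 ∧ V i ω ≤ u then (1 : ℝ) else 0) / n

/-!
The mean of `F̃` is nonnegative, so on the event in question `∑ᵢ 1(Aᵢ) ≥ a √(u(1-u)) √n`, where
the events `Aᵢ = {Bᵢ = 1, Vᵢ ≤ u}` are independent with probability at most `n^{-β}`. The Chernoff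
bound at `λ = 1` bounds this by `exp ((e - 1) n^{1-β} - a √(u(1-u)) √n)`, and `n^{1-β} = o(√n)`
since `β > 1/2`, so for large `n` the mean term uses up at most half of the exponent.
-/

namespace ProbabilityTheory

variable {Ω ι κ β : Type*} {mΩ : MeasurableSpace Ω} {mβ : MeasurableSpace β} {P : Measure Ω}

lemma iIndepSet_iInter_preimage [Fintype κ] {X : ι × κ → Ω → β} (hX : iIndepFun X P)
    (hXm : ∀ p, Measurable (X p)) {T : κ → Set β} (hT : ∀ j, MeasurableSet (T j)) :
    iIndepSet (fun i ↦ ⋂ j, X (i, j) ⁻¹' T j) P := by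
  have hbiInter (s : Finset ι) :
      P (⋂ i ∈ s, ⋂ j, X (i, j) ⁻¹' T j) = ∏ i ∈ s, ∏ j, P (X (i, j) ⁻¹' T j) := by
    rw [← Finset.prod_product', ← hX.meas_biInter (S := s ×ˢ Finset.univ)
      (fun p _ ↦ ⟨T p.2, hT p.2, rfl⟩)]
    congr 1
    ext ω
    simpa using forall_congr' fun _ ↦ forall_comm
  rw [iIndepSet_iff_meas_biInter fun i ↦ MeasurableSet.iInter fun j ↦ hXm _ (hT j)]
  intro s
  rw [hbiInter]
  refine Finset.prod_congr rfl fun i _ ↦ ?_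
  simpa using (hbiInter {i}).symm

lemma iIndepSet_preimage_inter_preimage {X Y : ι → Ω → β}
    (h : iIndepFun (fun p : ι × Fin 2 ↦ ![X p.1, Y p.1] p.2) P)
    (hX : ∀ i, Measurable (X i)) (hY : ∀ i, Measurable (Y i)) {s t : Set β}
    (hs : MeasurableSet s) (ht : MeasurableSet t) :
    iIndepSet (fun i ↦ X i ⁻¹' s ∩ Y i ⁻¹' t) P := by
  convert iIndepSet_iInter_preimage h (T := ![s, t]) (fun p ↦ ?_) (fun j ↦ ?_) using 2 with i
  · ext ω
    simp [Fin.forall_fin_two]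
  · obtain ⟨i, j⟩ := p
    fin_cases j
    exacts [hX i, hY i]
  · fin_cases j
    exacts [hs, ht]

lemma mgf_indicator_one [IsProbabilityMeasure P] {A : Set Ω} (hA : MeasurableSet A) (t : ℝ) :
    mgf (A.indicator 1) P t = 1 + (Real.exp t - 1) * P.real A := by
  have hexp : (fun ω ↦ Real.exp (t * A.indicator 1 ω)) =
      fun ω ↦ 1 + A.indicator (fun _ ↦ Real.exp t - 1) ω := by
    funext ω
    by_cases hω : ω ∈ A <;> simp [hω]
  rw [mgf, hexp, integral_add (integrable_const 1) ((integrable_const _).indicator hA),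
    integral_const, integral_indicator_const _ hA]
  simp [mul_comm]

lemma mgf_indicator_one_le [IsProbabilityMeasure P] {A : Set Ω} (hA : MeasurableSet A) {t : ℝ}
    (ht : 0 ≤ t) {p : ℝ} (hp : P.real A ≤ p) :
    mgf (A.indicator 1) P t ≤ Real.exp ((Real.exp t - 1) * p) := by
  have : 0 ≤ Real.exp t - 1 := by linarith [Real.one_le_exp ht]
  calc mgf (A.indicator 1) P t = 1 + (Real.exp t - 1) * P.real A := mgf_indicator_one hA t
    _ ≤ (Real.exp t - 1) * p + 1 := by nlinarith
    _ ≤ Real.exp ((Real.exp t - 1) * p) := Real.add_one_le_exp _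

lemma measureReal_sum_indicator_ge_le [Fintype ι] [IsProbabilityMeasure P] {A : ι → Set Ω}
    (hA : iIndepSet A P) (hAm : ∀ i, MeasurableSet (A i)) {p : ℝ} (hp : ∀ i, P.real (A i) ≤ p)
    {t : ℝ} (ht : 0 ≤ t) (x : ℝ) :
    P.real {ω | x ≤ ∑ i, (A i).indicator 1 ω} ≤
      Real.exp ((Real.exp t - 1) * (Fintype.card ι * p) - t * x) := by
  set S : Ω → ℝ := ∑ i, (A i).indicator 1
  have hXm : ∀ i, Measurable ((A i).indicator (1 : Ω → ℝ)) :=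
    fun i ↦ measurable_const.indicator (hAm i)
  have hX : iIndepFun (fun i ↦ (A i).indicator (1 : Ω → ℝ)) P := hA.iIndepFun_indicator
  have hint : Integrable (fun ω ↦ Real.exp (t * S ω)) P :=
    hX.integrable_exp_mul_sum hXm fun i _ ↦ integrable_exp_mul_of_le t 1 ht (hXm i).aemeasurable
      (ae_of_all _ fun _ ↦ Set.indicator_apply_le' (fun _ ↦ le_rfl) fun _ ↦ zero_le_one)
  have hmgf : mgf S P t ≤ Real.exp ((Real.exp t - 1) * (Fintype.card ι * p)) := by
    rw [hX.mgf_sum hXm, mul_left_comm, Real.exp_nat_mul, ← Finset.card_univ,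
      ← Finset.prod_const]
    exact Finset.prod_le_prod (fun _ _ ↦ mgf_nonneg)
      fun i _ ↦ mgf_indicator_one_le (hAm i) ht (hp i)
  calc P.real {ω | x ≤ ∑ i, (A i).indicator 1 ω} = P.real {ω | x ≤ S ω} := by simp [S]
    _ ≤ Real.exp (-t * x) * mgf S P t := measure_ge_le_exp_mul_mgf x ht hint
    _ ≤ Real.exp (-t * x) * Real.exp ((Real.exp t - 1) * (Fintype.card ι * p)) := by gcongr
    _ = _ := by rw [← Real.exp_add]; ring_nf

lemma measureReal_sum_indicator_ge_le_exp_neg_half [Fintype ι] [IsProbabilityMeasure P]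
    {A : ι → Set Ω} (hA : iIndepSet A P) (hAm : ∀ i, MeasurableSet (A i)) {p x : ℝ}
    (hp : ∀ i, P.real (A i) ≤ p) (hmean : Fintype.card ι * p ≤ x / (2 * (Real.exp 1 - 1))) :
    P.real {ω | x ≤ ∑ i, (A i).indicator 1 ω} ≤ Real.exp (-(x / 2)) := by
  have he : 0 < Real.exp 1 - 1 := sub_pos.2 (Real.one_lt_exp_iff.2 one_pos)
  have := (le_div_iff₀ (by positivity)).1 hmean
  exact (measureReal_sum_indicator_ge_le hA hAm hp zero_le_one x).trans
    (Real.exp_le_exp.2 (by linarith))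

end ProbabilityTheory

lemma bernoulliReal_singleton_one (p : ℝ) : bernoulliReal p {1} = ENNReal.ofReal p := by
  simp [bernoulliReal]

lemma measureReal_preimage_one_of_map_eq_bernoulliReal {Ω : Type*} {_ : MeasurableSpace Ω}
    {P : Measure Ω} {B : Ω → ℝ} (hBm : Measurable B) {p : ℝ} (hB : P.map B = bernoulliReal p)
    (hp : 0 ≤ p) : P.real (B ⁻¹' {1}) = p := by
  rw [measureReal_def, ← Measure.map_apply hBm (measurableSet_singleton 1), hB,
    bernoulliReal_singleton_one, ENNReal.toReal_ofReal hp]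

lemma eventually_natCast_mul_rpow_neg_le_mul_sqrt {β : ℝ} (hβ : 1 / 2 < β) {κ : ℝ} (hκ : 0 < κ) :
    ∀ᶠ n : ℕ in atTop, (n : ℝ) * (n : ℝ) ^ (-β) ≤ κ * Real.sqrt n := by
  have h : Tendsto (fun n : ℕ ↦ (n : ℝ) ^ (-(β - 1 / 2))) atTop (nhds 0) :=
    (tendsto_rpow_neg_atTop (by linarith)).comp tendsto_natCast_atTop_atTop
  filter_upwards [h.eventually_le_const hκ, eventually_gt_atTop 0] with n hn hn0
  have hn0 : (0 : ℝ) < n := Nat.cast_pos.2 hn0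
  calc (n : ℝ) * (n : ℝ) ^ (-β) = (n : ℝ) ^ (-(β - 1 / 2)) * Real.sqrt n := by
        rw [Real.sqrt_eq_rpow, ← Real.rpow_add hn0, show -(β - 1 / 2) + 1 / 2 = 1 + -β by ring,
          Real.rpow_add hn0, Real.rpow_one]
    _ ≤ κ * Real.sqrt n := by gcongr

lemma Ftil1_eq_sum_indicator_div {n : ℕ} {Ω : Type*} (B V : Fin n → Ω → ℝ) (u : ℝ) (ω : Ω) :
    Ftil1 B V u ω = (∑ i, (B i ⁻¹' {1} ∩ V i ⁻¹' Set.Iic u).indicator 1 ω) / n := by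
  classical
  simp only [Ftil1, Set.indicator_apply, Set.mem_inter_iff, Set.mem_preimage,
    Set.mem_singleton_iff, Set.mem_Iic, Pi.one_apply]

lemma Ftil1_nonneg {n : ℕ} {Ω : Type*} (B V : Fin n → Ω → ℝ) (u : ℝ) (ω : Ω) :
    0 ≤ Ftil1 B V u ω := by
  rw [Ftil1_eq_sum_indicator_div]
  exact div_nonneg (Finset.sum_nonneg fun i _ ↦ Set.indicator_nonneg (fun _ _ ↦ zero_le_one) ω)
    n.cast_nonneg

lemma mul_sqrt_le_sum_indicator_of_lt_sqrt_mul_Ftil1_sub {n : ℕ} {Ω : Type*}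
    (B V : Fin n → Ω → ℝ) (u : ℝ) {ω : Ω} {m c : ℝ} (hm : 0 ≤ m)
    (h : c < Real.sqrt n * (Ftil1 B V u ω - m)) :
    c * Real.sqrt n ≤ ∑ i, (B i ⁻¹' {1} ∩ V i ⁻¹' Set.Iic u).indicator 1 ω := by
  rw [Ftil1_eq_sum_indicator_div] at h
  set S := ∑ i, (B i ⁻¹' {1} ∩ V i ⁻¹' Set.Iic u).indicator (1 : Ω → ℝ) ω
  have hS : 0 ≤ S := Finset.sum_nonneg fun i _ ↦ Set.indicator_nonneg (fun _ _ ↦ zero_le_one) ω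
  rcases n.eq_zero_or_pos with rfl | hn
  · simpa using hS
  have hsn : 0 < Real.sqrt n := Real.sqrt_pos.2 (Nat.cast_pos.2 hn)
  have hc : c < S / Real.sqrt n := by
    calc c < Real.sqrt n * (S / n - m) := h
      _ ≤ Real.sqrt n * (S / n) := by gcongr; linarith
      _ = S / Real.sqrt n := by
        field_simp
        rw [Real.sq_sqrt n.cast_nonneg, mul_comm]
  exact ((lt_div_iff₀ hsn).1 hc).le

/-- concentration of the thinned alternative empirical process at a fixed
`u ∈ (0,1)`: for `β ∈ (1/2,1)` and `a > 0`, for all large `n`,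
`Pr(√n (F̃^{(1)}(u) − E F̃^{(1)}(u)) > a√(u(1−u))) ≤ e^{−(a/2)√(nu(1−u))} + e^{−n^{1/4}}`. -/
theorem alt_thinned_ecdf_concentration (β u a : ℝ)
    (hβ : β ∈ Set.Ioo (1/2 : ℝ) 1) (hu : u ∈ Set.Ioo (0 : ℝ) 1) (ha : 0 < a) :
    ∃ n0 : ℕ, ∀ n : ℕ, n0 ≤ n →
      ∀ (Ω : Type) (_ : MeasurableSpace Ω) (P : Measure Ω),
        IsProbabilityMeasure P →
        ∀ G : Fin n → Measure ℝ,
          (∀ i, IsProbabilityMeasure (G i)) →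
          (∀ i, G i (Set.Ioo (0 : ℝ) 1)ᶜ = 0) →
          ∀ B V : Fin n → Ω → ℝ,
            (∀ i, Measurable (B i)) → (∀ i, Measurable (V i)) →
            (∀ i, Measure.map (B i) P = bernoulliReal ((n : ℝ) ^ (-β))) →
            (∀ i, Measure.map (V i) P = G i) →
            iIndepFun
              (fun (p : Fin n × Fin 2) => ![B p.1, V p.1] p.2) P →
            P {ω | Real.sqrt n * (Ftil1 B V u ω - ∫ ω', Ftil1 B V u ω' ∂P) >
                a * Real.sqrt (u * (1 - u))} ≤
              ENNReal.ofReal (Real.exp (-(a / 2) * Real.sqrt ((n : ℝ) * u * (1 - u))) +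
                Real.exp (-(n : ℝ) ^ ((1 : ℝ) / 4))) := by
  set c := a * Real.sqrt (u * (1 - u)) with hc_def
  have hc : 0 < c := mul_pos ha (Real.sqrt_pos.2 (mul_pos hu.1 (sub_pos.2 hu.2)))
  have he : 0 < Real.exp 1 - 1 := sub_pos.2 (Real.one_lt_exp_iff.2 one_pos)
  obtain ⟨n0, hn0⟩ := eventually_atTop.1 (eventually_natCast_mul_rpow_neg_le_mul_sqrt hβ.1
    (div_pos hc (mul_pos two_pos he)))
  refine ⟨n0, fun n hn Ω _ P _ G _ _ B V hBm hVm hB _ hindep => ?_⟩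
  set A : Fin n → Set Ω := fun i ↦ B i ⁻¹' {1} ∩ V i ⁻¹' Set.Iic u
  have hpA (i : Fin n) : P.real (A i) ≤ (n : ℝ) ^ (-β) :=
    (measureReal_mono Set.inter_subset_left).trans
      (measureReal_preimage_one_of_map_eq_bernoulliReal (hBm i) (hB i) (by positivity)).le
  have hmean :
      Fintype.card (Fin n) * (n : ℝ) ^ (-β) ≤ c * Real.sqrt n / (2 * (Real.exp 1 - 1)) := by
    rw [Fintype.card_fin, mul_div_right_comm]
    exact hn0 n hn
  have hexponent : -(c * Real.sqrt n / 2) = -(a / 2) * Real.sqrt ((n : ℝ) * u * (1 - u)) := by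
    rw [hc_def, mul_assoc (n : ℝ), Real.sqrt_mul n.cast_nonneg]; ring
  calc P {ω | Real.sqrt n * (Ftil1 B V u ω - ∫ ω', Ftil1 B V u ω' ∂P) > c}
      ≤ P {ω | c * Real.sqrt n ≤ ∑ i, (A i).indicator 1 ω} :=
        measure_mono fun ω hω ↦ mul_sqrt_le_sum_indicator_of_lt_sqrt_mul_Ftil1_sub B V u
          (integral_nonneg (Ftil1_nonneg B V u)) hω
    _ = ENNReal.ofReal (P.real {ω | c * Real.sqrt n ≤ ∑ i, (A i).indicator 1 ω}) :=
        (ofReal_measureReal).symm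
    _ ≤ ENNReal.ofReal (Real.exp (-(c * Real.sqrt n / 2))) :=
        ENNReal.ofReal_le_ofReal <| measureReal_sum_indicator_ge_le_exp_neg_half
          (iIndepSet_preimage_inter_preimage hindep hBm hVm (measurableSet_singleton 1)
            measurableSet_Iic)
          (fun i ↦ (hBm i (measurableSet_singleton 1)).inter (hVm i measurableSet_Iic)) hpA hmean
    _ ≤ _ := by
        rw [hexponent]
        exact ENNReal.ofReal_le_ofReal (le_add_of_nonneg_right (Real.exp_pos _).le)
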